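/- For the coupled angular momenta system on S² × S² with parameters R₂ > R₁ > 0 and t ∈ [0,1], the functions f₁ = R₁z₁ + R₂z₂ and f₂,t = (1-t)z₁ + t(x₁x₂ + y₁y₂ + z₁z₂) Poisson-commute with respect to the symplectic form -(R₁ω_{S²} ⊕ R₂ω_{S²}). -/

import Mathlib

/-!
The coupled angular momenta system on `M = S² × S² ⊂ ℝ³ × ℝ³ ≅ ℝ⁶` with coordinates
`p = (x₁, y₁, z₁, x₂, y₂, z₂)`, each `xᵢ² + yᵢ² + zᵢ² = 1`, and symplectic form
`-(R₁ω_{S²} ⊕ R₂ω_{S²})`.  Equivalently the Poisson brackets are `{x₁,y₁} = -z₁/R₁`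
(and cyclic), `{x₂,y₂} = -z₂/R₂` (and cyclic), mixed brackets zero.
-/

abbrev P6 : Type := ℝ × ℝ × ℝ × ℝ × ℝ × ℝ

/-- Partial derivative of `f : ℝ⁶ → ℝ` at `p` in direction `e`. -/
noncomputable def pd6 (f : P6 → ℝ) (p e : P6) : ℝ := fderiv ℝ f p e

/-- The Poisson bracket on `ℝ³ × ℝ³` induced by the symplectic form
`-(R₁ω_{S²} ⊕ R₂ω_{S²})`:  `{x₁,y₁} = -z₁/R₁` (and cyclic), `{x₂,y₂} = -z₂/R₂`
(and cyclic), mixed brackets zero. -/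
noncomputable def pbCAM (R1 R2 : ℝ) (f g : P6 → ℝ) (p : P6) : ℝ :=
  -(1 / R1) *
    (p.2.2.1 * (pd6 f p (1,0,0,0,0,0) * pd6 g p (0,1,0,0,0,0)
        - pd6 f p (0,1,0,0,0,0) * pd6 g p (1,0,0,0,0,0))
    + p.1 * (pd6 f p (0,1,0,0,0,0) * pd6 g p (0,0,1,0,0,0)
        - pd6 f p (0,0,1,0,0,0) * pd6 g p (0,1,0,0,0,0))
    + p.2.1 * (pd6 f p (0,0,1,0,0,0) * pd6 g p (1,0,0,0,0,0)
        - pd6 f p (1,0,0,0,0,0) * pd6 g p (0,0,1,0,0,0)))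
  - (1 / R2) *
    (p.2.2.2.2.2 * (pd6 f p (0,0,0,1,0,0) * pd6 g p (0,0,0,0,1,0)
        - pd6 f p (0,0,0,0,1,0) * pd6 g p (0,0,0,1,0,0))
    + p.2.2.2.1 * (pd6 f p (0,0,0,0,1,0) * pd6 g p (0,0,0,0,0,1)
        - pd6 f p (0,0,0,0,0,1) * pd6 g p (0,0,0,0,1,0))
    + p.2.2.2.2.1 * (pd6 f p (0,0,0,0,0,1) * pd6 g p (0,0,0,1,0,0)
        - pd6 f p (0,0,0,1,0,0) * pd6 g p (0,0,0,0,0,1)))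

/-!
`f₁ = R₁z₁ + R₂z₂` is the moment map of the simultaneous rotation of both spheres about the
`z`-axis: the weights `1/R₁`, `1/R₂` of the bracket cancel `R₁`, `R₂`, so `{f₁, g}` is the
derivative of `g` along the generator `(-y₁, x₁, 0, -y₂, x₂, 0)` of that rotation.  Both `z₁` and
`x₁x₂ + y₁y₂ + z₁z₂` are invariant under the rotation, hence so is `f₂,t`, and its derivative
along the generator vanishes.
-/

open Real

noncomputable def rotZ (θ : ℝ) (p : P6) : P6 :=
  (cos θ * p.1 - sin θ * p.2.1, sin θ * p.1 + cos θ * p.2.1, p.2.2.1,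
    cos θ * p.2.2.2.1 - sin θ * p.2.2.2.2.1, sin θ * p.2.2.2.1 + cos θ * p.2.2.2.2.1, p.2.2.2.2.2)

def rotZGenerator (p : P6) : P6 :=
  (-p.2.1, p.1, 0, -p.2.2.2.2.1, p.2.2.2.1, 0)

lemma rotZ_zero (p : P6) : rotZ 0 p = p := by
  simp [rotZ]

lemma hasDerivAt_cos_mul_sub_sin_mul (a b : ℝ) :
    HasDerivAt (fun θ => cos θ * a - sin θ * b) (-b) 0 := by
  have h := ((hasDerivAt_cos 0).mul_const a).sub ((hasDerivAt_sin 0).mul_const b)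
  simp only [sin_zero, cos_zero, neg_zero, zero_mul, one_mul, zero_sub] at h
  exact h

lemma hasDerivAt_sin_mul_add_cos_mul (a b : ℝ) :
    HasDerivAt (fun θ => sin θ * a + cos θ * b) a 0 := by
  have h := ((hasDerivAt_sin 0).mul_const a).add ((hasDerivAt_cos 0).mul_const b)
  simp only [sin_zero, cos_zero, neg_zero, zero_mul, one_mul, add_zero] at h
  exact h

lemma hasDerivAt_rotZ (p : P6) : HasDerivAt (fun θ => rotZ θ p) (rotZGenerator p) 0 :=
  (hasDerivAt_cos_mul_sub_sin_mul _ _).prodMk <| (hasDerivAt_sin_mul_add_cos_mul _ _).prodMk <|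
    (hasDerivAt_const _ _).prodMk <| (hasDerivAt_cos_mul_sub_sin_mul _ _).prodMk <|
      (hasDerivAt_sin_mul_add_cos_mul _ _).prodMk (hasDerivAt_const _ _)

lemma pd6_rotZGenerator_eq_zero {g : P6 → ℝ} {p : P6} (hg : DifferentiableAt ℝ g p)
    (hinv : ∀ θ, g (rotZ θ p) = g p) : pd6 g p (rotZGenerator p) = 0 := by
  have hderiv : HasDerivAt (fun θ => g (rotZ θ p)) (pd6 g p (rotZGenerator p)) 0 := by
    have hg' : HasFDerivAt g (fderiv ℝ g p) (rotZ 0 p) := by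
      rw [rotZ_zero]
      exact hg.hasFDerivAt
    exact hg'.comp_hasDerivAt 0 (hasDerivAt_rotZ p)
  simp only [hinv] at hderiv
  exact hderiv.unique (hasDerivAt_const _ _)

lemma pd6_eq_sum_basis (g : P6 → ℝ) (p e : P6) :
    pd6 g p e = e.1 * pd6 g p (1,0,0,0,0,0) + e.2.1 * pd6 g p (0,1,0,0,0,0)
      + e.2.2.1 * pd6 g p (0,0,1,0,0,0) + e.2.2.2.1 * pd6 g p (0,0,0,1,0,0)
      + e.2.2.2.2.1 * pd6 g p (0,0,0,0,1,0) + e.2.2.2.2.2 * pd6 g p (0,0,0,0,0,1) := by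
  have he : e = e.1 • (1,0,0,0,0,0) + e.2.1 • (0,1,0,0,0,0) + e.2.2.1 • (0,0,1,0,0,0)
      + e.2.2.2.1 • (0,0,0,1,0,0) + e.2.2.2.2.1 • (0,0,0,0,1,0) + e.2.2.2.2.2 • (0,0,0,0,0,1) := by
    simp
  conv_lhs => rw [he]
  simp only [pd6, map_add, map_smul, smul_eq_mul]

lemma pd6_momentZ (R1 R2 : ℝ) (p e : P6) :
    pd6 (fun q => R1 * q.2.2.1 + R2 * q.2.2.2.2.2) p e = R1 * e.2.2.1 + R2 * e.2.2.2.2.2 := by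
  rw [pd6, fderiv_fun_add (by fun_prop) (by fun_prop), fderiv_const_mul (by fun_prop),
    fderiv_const_mul (by fun_prop)]
  simp (disch := fun_prop) [fderiv.fst, fderiv.snd]

lemma pbCAM_momentZ {R1 R2 : ℝ} (hR1 : R1 ≠ 0) (hR2 : R2 ≠ 0) (g : P6 → ℝ) (p : P6) :
    pbCAM R1 R2 (fun q => R1 * q.2.2.1 + R2 * q.2.2.2.2.2) g p = pd6 g p (rotZGenerator p) := by
  rw [pbCAM, pd6_eq_sum_basis g p (rotZGenerator p)]
  simp only [pd6_momentZ, rotZGenerator]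
  field_simp
  ring

lemma rotZ_dot_eq (θ : ℝ) (p : P6) :
    (rotZ θ p).1 * (rotZ θ p).2.2.2.1 + (rotZ θ p).2.1 * (rotZ θ p).2.2.2.2.1
      + (rotZ θ p).2.2.1 * (rotZ θ p).2.2.2.2.2
      = p.1 * p.2.2.2.1 + p.2.1 * p.2.2.2.2.1 + p.2.2.1 * p.2.2.2.2.2 := by
  simp only [rotZ]
  linear_combination (p.1 * p.2.2.2.1 + p.2.1 * p.2.2.2.2.1) * sin_sq_add_cos_sq θ

/-- `f₁ = R₁z₁ + R₂z₂` and `f₂,t = (1-t)z₁ + t(x₁x₂ + y₁y₂ + z₁z₂)` Poisson-commute on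
`S² × S²`, for every `t ∈ [0,1]`. -/
theorem coupled_angular_momenta_poisson_commute
    (R1 R2 : ℝ) (hR1 : 0 < R1) (hR12 : R1 < R2) :
    ∀ t ∈ Set.Icc (0 : ℝ) 1, ∀ p : P6,
      p.1 ^ 2 + p.2.1 ^ 2 + p.2.2.1 ^ 2 = 1 →
      p.2.2.2.1 ^ 2 + p.2.2.2.2.1 ^ 2 + p.2.2.2.2.2 ^ 2 = 1 →
      pbCAM R1 R2
        (fun q => R1 * q.2.2.1 + R2 * q.2.2.2.2.2)
        (fun q => (1 - t) * q.2.2.1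
          + t * (q.1 * q.2.2.2.1 + q.2.1 * q.2.2.2.2.1 + q.2.2.1 * q.2.2.2.2.2)) p = 0 := by
  intro t _ p _ _
  rw [pbCAM_momentZ hR1.ne' (hR1.trans hR12).ne']
  refine pd6_rotZGenerator_eq_zero (by fun_prop) fun θ => ?_
  rw [rotZ_dot_eq]
  rfl
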